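/- arXiv:2004.07321 — 3 statements merged into one kernel-verified Lean document; each statement's English description precedes it below -/
import Mathlib

section
/- A group G is surjunctive (for every finite set A, every injective cellular automaton over A^G is surjective) if and only if for every finite set A the monoid End(A^G) of cellular automata over A^G is directly finite (τ ∘ σ = id implies σ ∘ τ = id). -/
/-!
An injective cellular automaton `τ` over a finite alphabet has a cellular-automaton left
inverse: by compactness of `A^G`, the value `x 1` is already determined by `τ x` on a finite
window `T`, and the corresponding local rule on `A^T`, translated by shift-equivariance, is a
cellular automaton `σ` with `σ ∘ τ = id`. Hence surjunctivity (`σ` injective implies `σ`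
surjective) and direct finiteness (`σ ∘ τ = id` implies `τ ∘ σ = id`) become equivalent.
-/

/-- A cellular automaton over `A^G`: a map admitting a finite memory set `S` and a
local rule `μ : A^S → A` with `τ(x)(g) = μ((g⁻¹ · x)|_S)`, where the shift action
is `(g · x)(h) = x(g⁻¹ h)`, so `(g⁻¹ · x)(s) = x (g * s)`. -/
def IsCellularAutomaton {G A : Type*} [Group G] (τ : (G → A) → G → A) : Prop :=
  ∃ S : Set G, S.Finite ∧ ∃ μ : (S → A) → A, ∀ x g, τ x g = μ fun s => x (g * s.1)

open Function

theorem exists_finset_factorsThrough_of_injective {X ι D : Type*} {B : ι → Type*}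
    [TopologicalSpace X] [CompactSpace X] [∀ i, TopologicalSpace (B i)] [∀ i, T2Space (B i)]
    [TopologicalSpace D] [DiscreteTopology D] {f : X → ∀ i, B i} (hf : Continuous f)
    (hinj : Injective f) {φ : X → D} (hφ : Continuous φ) :
    ∃ T : Finset ι, FactorsThrough φ fun x (i : T) => f x i := by
  let U (i : ι) : Set (X × X) := {p | f p.1 i = f p.2 i}ᶜ
  have hU (i : ι) : IsOpen (U i) :=
    (isClosed_eq ((continuous_apply i).comp (hf.comp continuous_fst))
      ((continuous_apply i).comp (hf.comp continuous_snd))).isOpen_compl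
  have hclosed : IsClosed {p : X × X | φ p.1 ≠ φ p.2} :=
    ((isOpen_discrete {q : D × D | q.1 = q.2}).preimage
      ((hφ.comp continuous_fst).prodMk (hφ.comp continuous_snd))).isClosed_compl
  have hcover : {p : X × X | φ p.1 ≠ φ p.2} ⊆ ⋃ i, U i := fun p hp =>
    Set.mem_iUnion.mpr <| by_contra fun hnot =>
      hp <| congrArg φ <| hinj <| funext fun i => not_not.mp (not_exists.mp hnot i)
  obtain ⟨T, hT⟩ := hclosed.isCompact.elim_finite_subcover U hU hcover
  refine ⟨T, fun x y hxy => not_not.mp fun hne => ?_⟩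
  obtain ⟨i, hi, hxyi⟩ := Set.mem_iUnion₂.mp (hT (show (x, y) ∈ _ from hne))
  exact hxyi (congrFun hxy ⟨i, hi⟩)

namespace IsCellularAutomaton

variable {G A : Type*} [Group G] {τ : (G → A) → G → A}

theorem shift (hτ : IsCellularAutomaton τ) (x : G → A) (g t : G) :
    τ (fun h => x (g * h)) t = τ x (g * t) := by
  obtain ⟨S, -, μ, hμ⟩ := hτ
  simp only [hμ, mul_assoc]

theorem continuous [TopologicalSpace A] [DiscreteTopology A] (hτ : IsCellularAutomaton τ) :
    Continuous τ := by
  obtain ⟨S, hS, μ, hμ⟩ := hτ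
  have : Finite S := hS.to_subtype
  refine continuous_pi fun g => ?_
  simp only [hμ]
  exact continuous_of_discreteTopology.comp (continuous_pi fun s => continuous_apply _)

theorem exists_finset_factorsThrough [Finite A] (hτ : IsCellularAutomaton τ)
    (hinj : Injective τ) : ∃ T : Finset G, FactorsThrough (fun x => x 1) fun x (t : T) => τ x t :=
  let _ : TopologicalSpace A := ⊥
  have : DiscreteTopology A := ⟨rfl⟩
  exists_finset_factorsThrough_of_injective hτ.continuous hinj (continuous_apply 1)

theorem exists_leftInverse [Finite A] [Nonempty A] (hτ : IsCellularAutomaton τ)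
    (hinj : Injective τ) : ∃ σ, IsCellularAutomaton σ ∧ σ ∘ τ = id := by
  obtain ⟨T, hT⟩ := hτ.exists_finset_factorsThrough hinj
  let ν : (T → A) → A :=
    extend (fun x (t : T) => τ x t) (fun x => x 1) fun _ => Classical.arbitrary A
  refine ⟨fun x g => ν fun t => x (g * t), ⟨T, T.finite_toSet, ν, fun _ _ => rfl⟩, ?_⟩
  funext x g
  have hwindow : (fun t : T => τ x (g * t)) = fun t : T => τ (fun h => x (g * h)) t :=
    funext fun t => (hτ.shift x g t).symm
  simp only [comp_apply, id_eq, hwindow, ν, hT.extend_apply, mul_one]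

end IsCellularAutomaton

theorem surjunctive_iff_directlyFinite (G : Type u) [Group G] :
    (∀ (A : Type) (_ : Finite A), ∀ τ : (G → A) → G → A,
        IsCellularAutomaton τ → Function.Injective τ → Function.Surjective τ) ↔
      (∀ (A : Type) (_ : Finite A), ∀ τ σ : (G → A) → G → A,
        IsCellularAutomaton τ → IsCellularAutomaton σ →
          τ ∘ σ = id → σ ∘ τ = id) := by
  constructor
  · intro hsurj A hA τ σ _ hσ hτσ
    have hleft : LeftInverse τ σ := leftInverse_iff_comp.mpr hτσ
    exact (hleft.rightInverse_of_surjective (hsurj A hA σ hσ hleft.injective)).comp_eq_id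
  · intro hdf A hA τ hτ hinj
    cases isEmpty_or_nonempty A
    · exact fun y => isEmptyElim (y 1)
    obtain ⟨σ, hσ, hστ⟩ := hτ.exists_leftInverse hinj
    exact (leftInverse_iff_comp.mpr (hdf A hA σ τ hσ hτ hστ)).surjective
end

section
/- Let G be a surjunctive group and A a finite set. Then Rank(End(A^G)) = Rank(Aut(A^G)) + Rank(End(A^G) : Aut(A^G)); in particular Rank(Aut(A^G)) ≤ Rank(End(A^G)), so if End(A^G) is finitely generated then so is Aut(A^G). -/
open Pointwise

/-- The monoid `End(A^G)` of all cellular automata over `A^G` under composition,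
as a submonoid of `Function.End (G → A)`. -/
def CAMonoid (G A : Type*) [Group G] : Submonoid (Function.End (G → A)) where
  carrier := {τ | IsCellularAutomaton τ}
  one_mem' := by
    refine ⟨{1}, Set.finite_singleton 1, fun f => f ⟨1, rfl⟩, fun x g => ?_⟩
    show x g = x (g * 1)
    rw [mul_one]
  mul_mem' := by
    rintro a b ⟨S, hS, μ, hμ⟩ ⟨T, hT, ν, hν⟩
    refine ⟨S * T, hS.mul hT,
      fun y => μ fun s => ν fun t => y ⟨s.1 * t.1, Set.mul_mem_mul s.2 t.2⟩,
      fun x g => ?_⟩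
    show a (b x) g = _
    rw [hμ]
    congr 1
    funext s
    rw [hν]
    congr 1
    funext t
    rw [mul_assoc]

/-- The rank of a monoid: the least cardinality of a monoid generating set. -/
noncomputable def monoidRank (M : Type*) [Monoid M] : Cardinal :=
  ⨅ T : {T : Set M // Submonoid.closure T = ⊤}, Cardinal.mk T.1

/-- The relative rank of a subset `R` in a monoid `M`. -/
noncomputable def relRank (M : Type*) [Monoid M] (R : Set M) : Cardinal :=
  ⨅ W : {W : Set M // Submonoid.closure (R ∪ W) = ⊤}, Cardinal.mk W.1

/-!
In a Dedekind-finite monoid `M` a product is a unit only if both factors are, so the units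
lying in the submonoid generated by `T` are already generated by the units in `T`. Hence a
generating set `T` of `M` splits into a generating set `T ∩ Mˣ` of the group of units and a set
`T \ Mˣ` generating `M` relative to it, which gives `Rank M ≥ Rank Mˣ + Rank(M : Mˣ)`; the
reverse inequality holds in every monoid. The monoid of cellular automata over a surjunctive
group is Dedekind-finite: if `σ ∘ τ = id` then `τ` is injective, hence surjective, hence
`τ ∘ σ = id`.
-/

open Cardinal

section Rank

variable {M : Type*} [Monoid M]

theorem monoidRank_le_mk {T : Set M} (hT : Submonoid.closure T = ⊤) : monoidRank M ≤ #T :=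
  ciInf_le' (fun T : {T : Set M // Submonoid.closure T = ⊤} => #T.1) ⟨T, hT⟩

theorem relRank_le_mk {R W : Set M} (hW : Submonoid.closure (R ∪ W) = ⊤) : relRank M R ≤ #W :=
  ciInf_le' (fun W : {W : Set M // Submonoid.closure (R ∪ W) = ⊤} => #W.1) ⟨W, hW⟩

variable (M) in
theorem exists_closure_eq_top_mk_eq_monoidRank :
    ∃ T : Set M, Submonoid.closure T = ⊤ ∧ #T = monoidRank M := by
  have : Nonempty {T : Set M // Submonoid.closure T = ⊤} := ⟨⟨_, Submonoid.closure_univ⟩⟩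
  obtain ⟨⟨T, hT⟩, h⟩ := csInf_mem (Set.range_nonempty
    fun T : {T : Set M // Submonoid.closure T = ⊤} => #T.1)
  exact ⟨T, hT, h⟩

variable (M) in
theorem exists_closure_union_eq_top_mk_eq_relRank (R : Set M) :
    ∃ W : Set M, Submonoid.closure (R ∪ W) = ⊤ ∧ #W = relRank M R := by
  have : Nonempty {W : Set M // Submonoid.closure (R ∪ W) = ⊤} :=
    ⟨⟨_, by rw [Set.union_univ, Submonoid.closure_univ]⟩⟩
  obtain ⟨⟨W, hW⟩, h⟩ := csInf_mem (Set.range_nonempty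
    fun W : {W : Set M // Submonoid.closure (R ∪ W) = ⊤} => #W.1)
  exact ⟨W, hW, h⟩

theorem monoidRank_le_monoidRank_add_relRank (S : Submonoid M) :
    monoidRank M ≤ monoidRank S + relRank M S := by
  obtain ⟨T, hT, hTcard⟩ := exists_closure_eq_top_mk_eq_monoidRank S
  obtain ⟨W, hW, hWcard⟩ := exists_closure_union_eq_top_mk_eq_relRank M S
  have hclosure : Submonoid.closure (S.subtype '' T ∪ W) = ⊤ := by
    have hS : Submonoid.closure (S.subtype '' T) = S := by
      rw [← MonoidHom.map_mclosure, hT, ← MonoidHom.mrange_eq_map, Submonoid.mrange_subtype]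
    rw [Submonoid.closure_union, hS, ← Submonoid.closure_eq S, ← Submonoid.closure_union, hW]
  calc monoidRank M ≤ #↥(S.subtype '' T ∪ W) := monoidRank_le_mk hclosure
    _ ≤ #↥(S.subtype '' T) + #W := mk_union_le _ _
    _ ≤ #T + #W := add_le_add_left mk_image_le _
    _ = monoidRank S + relRank M S := by rw [hTcard, hWcard]

variable [IsDedekindFiniteMonoid M]

theorem mem_closure_inter_setOf_isUnit {T : Set M} {x : M} (hx : x ∈ Submonoid.closure T)
    (hu : IsUnit x) : x ∈ Submonoid.closure (T ∩ {u | IsUnit u}) := by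
  induction hx using Submonoid.closure_induction with
  | mem t ht => exact Submonoid.subset_closure ⟨ht, hu⟩
  | one => exact one_mem _
  | mul a b _ _ ha hb => exact mul_mem (ha (IsUnit.mul_iff.1 hu).1) (hb (IsUnit.mul_iff.1 hu).2)

theorem closure_preimage_val_isUnit_submonoid_eq_top {T : Set M}
    (hT : Submonoid.closure T = ⊤) :
    Submonoid.closure (Subtype.val ⁻¹' T : Set (IsUnit.submonoid M)) = ⊤ := by
  refine eq_top_iff.2 fun u _ => ?_
  have hu : (u : M) ∈ Submonoid.closure (T ∩ {u | IsUnit u}) :=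
    mem_closure_inter_setOf_isUnit (hT ▸ Submonoid.mem_top _) u.2
  rwa [← Submonoid.mem_map_iff_mem (f := (IsUnit.submonoid M).subtype) Subtype.val_injective,
    MonoidHom.map_mclosure, Submonoid.coe_subtype, Set.image_preimage_eq_inter_range,
    Subtype.range_coe]

theorem monoidRank_isUnit_submonoid_add_relRank_le {T : Set M}
    (hT : Submonoid.closure T = ⊤) :
    monoidRank (IsUnit.submonoid M) + relRank M {u | IsUnit u} ≤ #T := by
  set R : Set M := {u | IsUnit u}
  have hunits : monoidRank (IsUnit.submonoid M) ≤ #↥(T ∩ R) := by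
    calc monoidRank (IsUnit.submonoid M)
        ≤ #(Subtype.val ⁻¹' T : Set (IsUnit.submonoid M)) :=
          monoidRank_le_mk (closure_preimage_val_isUnit_submonoid_eq_top hT)
      _ = #↥(T ∩ R) := by
          rw [← mk_image_eq Subtype.val_injective, Set.image_preimage_eq_inter_range,
            Subtype.range_coe]
          rfl
  have hrel : relRank M R ≤ #↥(T \ R) := by
    refine relRank_le_mk (eq_top_iff.2 (hT ▸ Submonoid.closure_mono fun t ht => ?_))
    by_cases h : IsUnit t
    · exact Or.inl h
    · exact Or.inr ⟨ht, h⟩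
  calc monoidRank (IsUnit.submonoid M) + relRank M R ≤ #↥(T ∩ R) + #↥(T \ R) :=
        add_le_add hunits hrel
    _ = #T := by
        rw [← mk_union_of_disjoint (Set.disjoint_sdiff_inter.symm), Set.inter_union_sdiff]

variable (M) in
theorem monoidRank_eq_monoidRank_isUnit_submonoid_add_relRank :
    monoidRank M = monoidRank (IsUnit.submonoid M) + relRank M {u | IsUnit u} := by
  refine le_antisymm (monoidRank_le_monoidRank_add_relRank _) ?_
  obtain ⟨T, hT, hTcard⟩ := exists_closure_eq_top_mk_eq_monoidRank M
  exact hTcard ▸ monoidRank_isUnit_submonoid_add_relRank_le hT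

end Rank

theorem CAMonoid.isDedekindFiniteMonoid_of_surjunctive {G A : Type*} [Group G]
    (hsurj : ∀ τ : (G → A) → G → A, IsCellularAutomaton τ → Function.Injective τ →
      Function.Surjective τ) :
    IsDedekindFiniteMonoid (CAMonoid G A) where
  mul_eq_one_symm {σ τ} h := by
    have hστ : Function.LeftInverse σ.1 τ.1 := fun x => congrFun (congrArg Subtype.val h) x
    exact Subtype.ext <| funext <|
      hστ.rightInverse_of_surjective (hsurj τ.1 τ.2 hστ.injective)

theorem rank_CAMonoid_eq_of_surjunctive (G : Type) [Group G] (A : Type) [Finite A]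
    (hsurj : ∀ (B : Type) (_ : Finite B), ∀ τ : (G → B) → G → B,
      IsCellularAutomaton τ → Function.Injective τ → Function.Surjective τ) :
    monoidRank (CAMonoid G A) =
        monoidRank (IsUnit.submonoid (CAMonoid G A)) +
          relRank (CAMonoid G A) {u : CAMonoid G A | IsUnit u} ∧
      monoidRank (IsUnit.submonoid (CAMonoid G A)) ≤ monoidRank (CAMonoid G A) ∧
      (monoidRank (CAMonoid G A) < Cardinal.aleph0 →
        monoidRank (IsUnit.submonoid (CAMonoid G A)) < Cardinal.aleph0) := by
  have := CAMonoid.isDedekindFiniteMonoid_of_surjunctive (hsurj A ‹_›)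
  have hrank := monoidRank_eq_monoidRank_isUnit_submonoid_add_relRank (CAMonoid G A)
  have hle : monoidRank (IsUnit.submonoid (CAMonoid G A)) ≤ monoidRank (CAMonoid G A) :=
    hrank ▸ le_self_add
  exact ⟨hrank, hle, hle.trans_lt⟩
end

section
/- Let V be a nonzero finite-dimensional vector space over an infinite field F and G any group. Then the monoid (under multiplication) of the group ring End(V)[G] ≅ End_F(V^G) is not finitely generated. -/
/-!
Composing the augmentation `End(V)[G] → End(V)` with the determinant gives a surjective
multiplicative map onto `F`, so a finite generating set of `End(V)[G]` would yield one of
the multiplicative monoid of `F`. That would make `F` a finitely generated `ℤ`-algebra, hence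
(Zariski's lemma, `ℤ` being a Jacobson ring) a finite `ℤ`-module: impossible in characteristic
zero since `ℤ` is not a field, and forcing `F` to be finite in characteristic `p`.
-/

theorem IsPrincipalIdealRing.isJacobsonRing_of_jacobson_bot {R : Type*} [CommRing R] [IsDomain R]
    [IsPrincipalIdealRing R] (h : (⊥ : Ideal R).jacobson = ⊥) : IsJacobsonRing R :=
  isJacobsonRing_iff_prime_eq.mpr fun {P} _ => by
    rcases eq_or_ne P ⊥ with rfl | hP
    · exact h
    · have := IsPrime.to_maximal_ideal hP
      exact Ideal.jacobson_eq_self_of_isMaximal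

theorem Int.jacobson_bot : (⊥ : Ideal ℤ).jacobson = ⊥ := by
  refine eq_bot_iff.mpr fun x hx => ?_
  rw [Ideal.mem_jacobson_bot] at hx
  have h₁ := Int.isUnit_iff.mp (hx 1)
  have h₂ := Int.isUnit_iff.mp (hx (-1))
  rw [Ideal.mem_bot]
  omega

instance Int.isJacobsonRing : IsJacobsonRing ℤ :=
  IsPrincipalIdealRing.isJacobsonRing_of_jacobson_bot Int.jacobson_bot

theorem Algebra.FiniteType.of_monoidFG (R A : Type*) [CommRing R] [Semiring A] [Algebra R A]
    [Monoid.FG A] : Algebra.FiniteType R A :=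
  .of_surjective (MonoidAlgebra.lift R A A (MonoidHom.id A))
    fun a => ⟨MonoidAlgebra.of R A a, MonoidAlgebra.lift_of _ _⟩

theorem Field.finite_of_finiteType_int (F : Type*) [Field F] [Algebra.FiniteType ℤ F] :
    Finite F := by
  have : Module.Finite ℤ F := finite_of_finite_type_of_isJacobsonRing ℤ F
  rcases CharP.char_is_prime_or_zero F (ringChar F) with hp | hp
  · have : Fact (ringChar F).Prime := ⟨hp⟩
    let := ZMod.algebra F (ringChar F)
    have : Module.Finite (ZMod (ringChar F)) F := .of_restrictScalars_finite ℤ _ F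
    exact Module.finite_of_finite (ZMod (ringChar F))
  · have : CharZero F := (CharP.ringChar_zero_iff_CharZero F).mp hp
    exact (Int.not_isField ((Algebra.IsIntegral.isField_iff_isField
      (FaithfulSMul.algebraMap_injective ℤ F)).mpr (Field.toIsField F))).elim

theorem Field.not_monoidFG_of_infinite (F : Type*) [Field F] [Infinite F] : ¬ Monoid.FG F := by
  intro
  have := Algebra.FiniteType.of_monoidFG ℤ F
  have := Field.finite_of_finiteType_int F
  exact not_finite F

theorem LinearMap.det_surjective {R M : Type*} [CommRing R] [AddCommGroup M] [Module R M]
    [Module.Free R M] [Module.Finite R M] [Nontrivial M] :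
    Function.Surjective (LinearMap.det : Module.End R M →* R) := by
  classical
  intro c
  let b := Module.Free.chooseBasis R M
  obtain ⟨i⟩ := b.index_nonempty
  refine ⟨Matrix.toLin b b (Matrix.diagonal (Function.update 1 i c)), ?_⟩
  rw [LinearMap.det_toLin, Matrix.det_diagonal, Finset.prod_update_of_mem (Finset.mem_univ i)]
  simp

namespace MonoidAlgebra

variable (k G : Type*) [Semiring k] [Monoid G]

noncomputable def augmentation : MonoidAlgebra k G →+* k :=
  liftNCRingHom (RingHom.id k) 1 fun _ _ => Commute.one_right _

@[simp]
theorem augmentation_single (g : G) (a : k) : augmentation k G (single g a) = a := by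
  simp [augmentation, liftNCRingHom, liftNC_single]

theorem augmentation_surjective : Function.Surjective (augmentation k G) :=
  fun a => ⟨single 1 a, augmentation_single k G 1 a⟩

end MonoidAlgebra

theorem linCA_monoid_not_fg_of_infinite_field (F : Type*) [Field F] [Infinite F]
    (V : Type*) [AddCommGroup V] [Module F V] [FiniteDimensional F V] [Nontrivial V]
    (G : Type*) [Group G] :
    ¬ Monoid.FG (MonoidAlgebra (Module.End F V) G) := by
  intro
  let aug := MonoidAlgebra.augmentation (Module.End F V) G
  have hsurj : Function.Surjective (LinearMap.det.comp aug.toMonoidHom) :=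
    LinearMap.det_surjective.comp (MonoidAlgebra.augmentation_surjective _ _)
  exact Field.not_monoidFG_of_infinite F (Monoid.fg_of_surjective _ hsurj)
end
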